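/- Let N be a complete binary L-network with leaf set L0 ⊆ L = [n]. For a ∈ L, the vector δ_a (the (n+1)-vector indexed 0..n with a single 1 in coordinate a) occurs with multiplicity exactly 1 among all simple μ-vectors in the edge-based μ-representation μ(N) if and only if a is a leaf of N. -/

import Mathlib

open scoped Classical

noncomputable section

/-! ## Tags, μ-vectors, cherry types -/

inductive Tag : Type
  | te | hy | rn | ie
deriving DecidableEq, Inhabited

/-- The four cherry types (r2), (r3), (d), (u). -/
inductive CT : Type
  | r2 | r3 | d | u
deriving DecidableEq, Inhabited

/-- The eight cherry kinds: tree/reticulate combined with the four types. -/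
inductive CherryKind : Type
  | Tr2 | Tr3 | Td | Tu | Rr2 | Rr3 | Rd | Ru
deriving DecidableEq, Inhabited

def CherryKind.isTree : CherryKind → Bool
  | .Tr2 | .Tr3 | .Td | .Tu => true
  | _ => false

def CherryKind.ct : CherryKind → CT
  | .Tr2 => .r2 | .Tr3 => .r3 | .Td => .d | .Tu => .u
  | .Rr2 => .r2 | .Rr3 => .r3 | .Rd => .d | .Ru => .u

/-- A simple μ-vector on `n` taxa: coordinate 0 counts paths to hybrid nodes,
coordinate `i.succ` counts paths to the leaf labelled `i`. -/
abbrev MuVec (n : ℕ) := Fin (n + 1) → ℕ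

/-- A μ-entry: a multiset of (one or two) tagged simple μ-vectors. -/
abbrev MuEntry (n : ℕ) := Multiset (MuVec n × Tag)

/-- An edge-based μ-representation: a multiset of μ-entries. -/
abbrev MuRep (n : ℕ) := Multiset (MuEntry n)

/-- Indicator μ-vector `δ_S`. -/
def dlt {n : ℕ} (s : Finset (Fin (n + 1))) : MuVec n := fun i => if i ∈ s then 1 else 0

/-! ## Semidirected multigraphs with labelled leaves -/

/-- A semidirected multigraph on vertex names `ℕ` and edge names `ℕ`;
`dir e = true` means `e` is directed from `tail e` to `head e`;
`dir e = false` means `e` is an undirected edge with endpoints `tail e`, `head e`.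
Leaves may be labelled by taxa in `Fin n`. -/
structure Net (n : ℕ) where
  V : Finset ℕ
  E : Finset ℕ
  tail : ℕ → ℕ
  head : ℕ → ℕ
  dir : ℕ → Bool
  lbl : ℕ → Option (Fin n)

namespace Net

variable {n : ℕ}

def indeg (N : Net n) (v : ℕ) : ℕ :=
  (N.E.filter (fun e => N.dir e = true ∧ N.head e = v)).card
def outdeg (N : Net n) (v : ℕ) : ℕ :=
  (N.E.filter (fun e => N.dir e = true ∧ N.tail e = v)).card
def undeg (N : Net n) (v : ℕ) : ℕ :=
  (N.E.filter (fun e => N.dir e = false ∧ (N.tail e = v ∨ N.head e = v))).card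
def deg (N : Net n) (v : ℕ) : ℕ := N.indeg v + N.outdeg v + N.undeg v

def IsRootNode (N : Net n) (v : ℕ) : Prop := v ∈ N.V ∧ N.indeg v = 0 ∧ N.undeg v = 0
def IsLeafNode (N : Net n) (v : ℕ) : Prop := v ∈ N.V ∧ N.outdeg v = 0 ∧ N.undeg v = 0
def IsHybrid (N : Net n) (v : ℕ) : Prop := 2 ≤ N.indeg v
def IsTreeNode (N : Net n) (v : ℕ) : Prop := N.indeg v ≤ 1

/-- Source of a step `(e, forward?)` of a semidirected walk. -/
def src (N : Net n) (s : ℕ × Bool) : ℕ := if s.2 then N.tail s.1 else N.head s.1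
/-- Destination of a step. -/
def dst (N : Net n) (s : ℕ × Bool) : ℕ := if s.2 then N.head s.1 else N.tail s.1

/-- A step is legal from `u`: the edge is in the graph, directed edges are
traversed forwards, and the step starts at `u`. -/
def stepOK (N : Net n) (u : ℕ) (s : ℕ × Bool) : Prop :=
  s.1 ∈ N.E ∧ (N.dir s.1 = true → s.2 = true) ∧ N.src s = u

/-- `chain N u p x`: `p` is a semidirected walk from `u` to `x`. -/
def chain (N : Net n) : ℕ → List (ℕ × Bool) → ℕ → Prop
  | u, [], x => u = x
  | u, s :: p, x => N.stepOK u s ∧ N.chain (N.dst s) p x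

/-- A semidirected path (walk without repeated vertices) from `u` to `x`. -/
def IsPath (N : Net n) (u x : ℕ) (p : List (ℕ × Bool)) : Prop :=
  u ∈ N.V ∧ N.chain u p x ∧ (u :: p.map N.dst).Nodup

def paths (N : Net n) (u x : ℕ) : Set (List (ℕ × Bool)) := {p | N.IsPath u x p}
def pathsAvoid (N : Net n) (u x : ℕ) (e : ℕ) : Set (List (ℕ × Bool)) :=
  {p | N.IsPath u x p ∧ e ∉ p.map Prod.fst}

/-- `m N u x` : the number of semidirected paths from `u` to `x`. -/
def m (N : Net n) (u x : ℕ) : ℕ := (N.paths u x).ncard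
/-- `mAvoid N u x e` : the number of semidirected paths from `u` to `x` avoiding `e`. -/
def mAvoid (N : Net n) (u x : ℕ) (e : ℕ) : ℕ := (N.pathsAvoid u x e).ncard

/-- One undirected edge joins `u` and `v`. -/
def ustep (N : Net n) (u v : ℕ) : Prop :=
  ∃ e ∈ N.E, N.dir e = false ∧
    ((N.tail e = u ∧ N.head e = v) ∨ (N.tail e = v ∧ N.head e = u))

/-- `u ~ v`: joined by a path consisting solely of undirected edges. -/
def UndirConn (N : Net n) : ℕ → ℕ → Prop := Relation.ReflTransGen N.ustep

/-- A semidirected cycle. -/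
def IsSDCycle (N : Net n) (p : List (ℕ × Bool)) : Prop :=
  ∃ u, p ≠ [] ∧ N.chain u p u ∧ (p.map N.dst).Nodup ∧ (p.map Prod.fst).Nodup

def Acyclic (N : Net n) : Prop := ∀ p, ¬ N.IsSDCycle p

/-- `x` is the leaf labelled `a`. -/
def HasLeaf (N : Net n) (a : Fin n) (x : ℕ) : Prop := x ∈ N.V ∧ N.lbl x = some a

/-- `N` is an `L`-network: a semidirected acyclic graph whose leaves are tree
nodes, with leaves injectively labelled. -/
structure IsLNetwork (N : Net n) : Prop where
  wfT : ∀ e ∈ N.E, N.tail e ∈ N.V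
  wfH : ∀ e ∈ N.E, N.head e ∈ N.V
  acyclic : N.Acyclic
  leavesTree : ∀ v, N.IsLeafNode v → N.IsTreeNode v
  lblV : ∀ v, v ∉ N.V → N.lbl v = none
  lblLeaf : ∀ v ∈ N.V, ((N.lbl v).isSome ↔ N.IsLeafNode v)
  lblInj : ∀ v ∈ N.V, ∀ w ∈ N.V, N.lbl v ≠ none → N.lbl v = N.lbl w → v = w

/-- Binary: roots of degree 0, 2 or 3; leaves of degree 0 or 1; other nodes of degree 3. -/
def IsBinary (N : Net n) : Prop :=
  ∀ v ∈ N.V,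
    (N.IsRootNode v → N.deg v = 0 ∨ N.deg v = 2 ∨ N.deg v = 3) ∧
    (N.IsLeafNode v → N.deg v = 0 ∨ N.deg v = 1) ∧
    (¬ N.IsRootNode v → ¬ N.IsLeafNode v → N.deg v = 3)

/-- The class of `v` under `~` is a singleton. -/
def TrivialClass (N : Net n) (v : ℕ) : Prop := ∀ w, N.UndirConn v w → w = v

/-- Complete: edges incident to leaves are directed (toward the leaves), and every
nontrivial class under `~` has in-degree 0 in the contraction `N/~`. -/
def IsComplete (N : Net n) : Prop :=
  (∀ e ∈ N.E, N.dir e = false → ¬ N.IsLeafNode (N.tail e) ∧ ¬ N.IsLeafNode (N.head e)) ∧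
  (∀ v ∈ N.V, ¬ N.TrivialClass v → ∀ e ∈ N.E, N.dir e = true → ¬ N.UndirConn (N.head e) v)

/-- The class `[v]` is a root of the contraction `N/~`: no directed edge points into it. -/
def IsRootClass (N : Net n) (v : ℕ) : Prop :=
  v ∈ N.V ∧ ∀ e ∈ N.E, N.dir e = true → ¬ N.UndirConn (N.head e) v

/-- `v` belongs to an unresolved root component. -/
def UnresolvedRC (N : Net n) (v : ℕ) : Prop :=
  N.IsRootClass v ∧ (¬ N.TrivialClass v ∨ N.deg v = 3)

/-- `e` belongs to the admissible edge set of the root component of `v0`. -/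
def AdmFor (N : Net n) (v0 e : ℕ) : Prop := e ∈ N.E ∧ N.UndirConn (N.tail e) v0

/-! ## μ-representation of a network -/

def Hybs (N : Net n) : Finset ℕ := N.V.filter (fun v => N.IsHybrid v)

def mToLbl (N : Net n) (v : ℕ) (a : Fin n) : ℕ :=
  ∑ x ∈ N.V.filter (fun x => N.lbl x = some a), N.m v x
def mToLblAvoid (N : Net n) (v : ℕ) (a : Fin n) (e : ℕ) : ℕ :=
  ∑ x ∈ N.V.filter (fun x => N.lbl x = some a), N.mAvoid v x e

/-- Numbers of paths from `v` to hybrids (coordinate 0) and to each leaf. -/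
def muFrom (N : Net n) (v : ℕ) : MuVec n :=
  fun i => Fin.cases (∑ h ∈ N.Hybs, N.m v h) (fun a => N.mToLbl v a) i

/-- Numbers of paths from `v` avoiding edge `e`. -/
def muAt (N : Net n) (e : ℕ) (v : ℕ) : MuVec n :=
  fun i => Fin.cases (∑ h ∈ N.Hybs, N.mAvoid v h e) (fun a => N.mToLblAvoid v a e) i

/-- The μ-entry of an edge. -/
def muEntryEdge (N : Net n) (e : ℕ) : MuEntry n :=
  if N.dir e = true then
    let t : Tag := if N.IsHybrid (N.head e) then Tag.hy else Tag.te
    if N.UnresolvedRC (N.tail e) then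
      ({(N.muAt e (N.head e), t),
        (fun i => N.muFrom (N.tail e) i - N.muAt e (N.tail e) i, Tag.ie)} : MuEntry n)
    else ({(N.muAt e (N.head e), t)} : MuEntry n)
  else
    ({(N.muAt e (N.head e), Tag.te), (N.muAt e (N.tail e), Tag.te)} : MuEntry n)

/-- One μ-entry per root component (indexed by the minimal representative). -/
def rootEntries (N : Net n) : MuRep n :=
  ((N.V.filter (fun v => N.IsRootClass v ∧ ∀ w ∈ N.V, N.UndirConn v w → v ≤ w)).val).map
    (fun v => ({(N.muFrom v, Tag.rn)} : MuEntry n))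

/-- The edge-based μ-representation of `N`. -/
def muRep (N : Net n) : MuRep n :=
  N.E.val.map (fun e => N.muEntryEdge e) + N.rootEntries

end Net

/-! ## Operations on μ-representations -/

variable {n : ℕ}

/-- Multiplicity of a simple μ-vector in a μ-representation: the number of
entries (with multiplicity) containing it. -/
def multVec (μs : MuRep n) (m : MuVec n) : ℕ :=
  μs.countP (fun ent => ∃ t, (m, t) ∈ ent)

def hasTagged (μs : MuRep n) (mt : MuVec n × Tag) : Prop := ∃ ent ∈ μs, mt ∈ ent

/-- The entry of a simple μ-vector (meaningful when its multiplicity is 1). -/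
def entryOf (μs : MuRep n) (m : MuVec n) : MuEntry n :=
  if h : ∃ ent ∈ μs, ∃ t, (m, t) ∈ ent then h.choose else 0

/-- The tag of a simple μ-vector (meaningful when its multiplicity is 1). -/
def tagOf (μs : MuRep n) (m : MuVec n) : Tag :=
  if hasTagged μs (m, Tag.rn) then Tag.rn
  else if hasTagged μs (m, Tag.ie) then Tag.ie
  else if hasTagged μs (m, Tag.te) then Tag.te
  else Tag.hy

/-- The tagged μ-vectors other than `m` in the entry of `m`. -/
def invParts (μs : MuRep n) (m : MuVec n) : MuEntry n :=
  (entryOf μs m).filter (fun mt => mt.1 ≠ m)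

def hasInv (μs : MuRep n) (m : MuVec n) : Prop := invParts μs m ≠ 0

/-- The inverse `m⁻¹` of `m` (meaningful when it exists). -/
def invVec (μs : MuRep n) (m : MuVec n) : MuVec n := ((invParts μs m).toList.headI).1

/-- `(a,b)` is a tree cherry of the μ-representation. -/
def MuTreeCherry (μs : MuRep n) (a b : Fin n) : Prop :=
  multVec μs (dlt ({a.succ, b.succ} : Finset (Fin (n + 1)))) = 1

/-- Type of a tree cherry of a μ-representation. -/
def muTreeType (μs : MuRep n) (a b : Fin n) : CT :=
  let mab := dlt ({a.succ, b.succ} : Finset (Fin (n + 1)))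
  match tagOf μs mab with
  | Tag.rn => CT.r2
  | Tag.ie => CT.r3
  | Tag.te =>
      if (¬ hasInv μs mab) ∨ (∃ mt ∈ invParts μs mab, mt.2 = Tag.ie) then CT.d else CT.u
  | Tag.hy => CT.u

/-- `(a,b)` is a reticulate cherry of the μ-representation. -/
def MuRetCherry (μs : MuRep n) (a b : Fin n) : Prop :=
  multVec μs (dlt ({0, a.succ} : Finset (Fin (n + 1)))) = 2 ∧
    (multVec μs (dlt ({0, a.succ, b.succ} : Finset (Fin (n + 1)))) = 1 ∨
      (multVec μs (dlt ({0, a.succ, b.succ} : Finset (Fin (n + 1)))) = 2 ∧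
        ∀ ent ∈ μs, ∀ t : Tag,
          (dlt ({0, a.succ, b.succ} : Finset (Fin (n + 1))), t) ∈ ent → t = Tag.ie))

/-- Type of a reticulate cherry of a μ-representation. -/
def muRetType (μs : MuRep n) (a b : Fin n) : CT :=
  let mab := dlt ({0, a.succ, b.succ} : Finset (Fin (n + 1)))
  if multVec μs mab = 2 then CT.r3
  else
    match tagOf μs mab with
    | Tag.rn => CT.r2
    | Tag.ie => CT.r3
    | Tag.te =>
        if (¬ hasInv μs mab) ∨ (∃ mt ∈ invParts μs mab, mt.2 = Tag.ie) then CT.d else CT.u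
    | Tag.hy => CT.u

/-- `δ_{0,a,b}⁻¹`, defined as `δ_{0,a}` in the multiplicity-2 (parallel) case. -/
def retInv (μs : MuRep n) (a b : Fin n) : MuVec n :=
  if multVec μs (dlt ({0, a.succ, b.succ} : Finset (Fin (n + 1)))) = 2 then
    dlt ({0, a.succ} : Finset (Fin (n + 1)))
  else invVec μs (dlt ({0, a.succ, b.succ} : Finset (Fin (n + 1))))

/-- The internal μ-entry of a reticulate cherry `(a,b)` with respect to `μs`. -/
def internalEntry (μs : MuRep n) (a b : Fin n) : MuEntry n :=
  let d0a := dlt ({0, a.succ} : Finset (Fin (n + 1)))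
  let d0ab := dlt ({0, a.succ, b.succ} : Finset (Fin (n + 1)))
  if multVec μs d0ab = 1 ∧
      ((¬ hasInv μs d0ab) ∨ (∃ mt ∈ invParts μs d0ab, mt.2 = Tag.ie)) then
    ({(d0a, Tag.hy)} : MuEntry n)
  else
    ({(d0a, Tag.hy), (fun i => d0ab i + retInv μs a b i - d0a i, Tag.ie)} : MuEntry n)

/-- Remove the whole entry of `m`. -/
def removeEntryOf (μs : MuRep n) (m : MuVec n) : MuRep n := μs.erase (entryOf μs m)

/-- Remove `m⁻¹` from the entry of `m` (keeping `m`). -/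
def removeInvOf (μs : MuRep n) (m : MuVec n) : MuRep n :=
  (μs.erase (entryOf μs m)) + {(entryOf μs m).filter (fun mt => mt.1 = m)}

/-- Remove `m` from its entry (keeping the rest of the entry). -/
def removeVecOf (μs : MuRep n) (m : MuVec n) : MuRep n :=
  (μs.erase (entryOf μs m)) + {(entryOf μs m).filter (fun mt => mt.1 ≠ m)}

def entryOfT (μs : MuRep n) (mt : MuVec n × Tag) : MuEntry n :=
  if h : ∃ ent ∈ μs, mt ∈ ent then h.choose else 0

/-- Remove one occurrence of the tagged μ-vector `mt` from some entry containing it. -/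
def removeTaggedOnce (μs : MuRep n) (mt : MuVec n × Tag) : MuRep n :=
  (μs.erase (entryOfT μs mt)) + {(entryOfT μs mt).erase mt}

/-- Change the tag of `m⁻¹` (within the entry of `m`) to `ie`. -/
def retagInvIe (μs : MuRep n) (m : MuVec n) : MuRep n :=
  let ent := entryOf μs m
  (μs.erase ent) +
    {ent.filter (fun mt => mt.1 = m) + (invParts μs m).map (fun mt => (mt.1, Tag.ie))}

/-- Change the tag of one occurrence of the tagged μ-vector `mt` to `t'`. -/
def retagTaggedTo (μs : MuRep n) (mt : MuVec n × Tag) (t' : Tag) : MuRep n :=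
  let ent := entryOfT μs mt
  (μs.erase ent) + {(ent.erase mt) + ({(mt.1, t')} : MuEntry n)}

/-- Apply `f` to every simple μ-vector of every entry. -/
def mapVecs (f : MuVec n → MuVec n) (μs : MuRep n) : MuRep n :=
  μs.map (fun ent => ent.map (fun mt => (f mt.1, mt.2)))

/-- `(m_0, m_a, m_b, …) ↦ (m_0, 0, m_b, …)`. -/
def zeroCoordA (a : Fin n) (m : MuVec n) : MuVec n :=
  fun i => if i = a.succ then 0 else m i

/-- `(m_0, m_a, m_b, …) ↦ (m_0 − m_a, m_a − m_b, m_b, …)`. -/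
def retAdj (a b : Fin n) (m : MuVec n) : MuVec n :=
  fun i => if i = 0 then m 0 - m a.succ else if i = a.succ then m a.succ - m b.succ else m i

/-- Reduction of a tree cherry `(a,b)` on a μ-representation. -/
def muReduceTree (μs : MuRep n) (a b : Fin n) : MuRep n :=
  let dab := dlt ({a.succ, b.succ} : Finset (Fin (n + 1)))
  let da := dlt ({a.succ} : Finset (Fin (n + 1)))
  let db := dlt ({b.succ} : Finset (Fin (n + 1)))
  let μ1 :=
    match muTreeType μs a b with
    | CT.r2 => removeEntryOf μs db
    | CT.d => removeEntryOf μs db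
    | CT.r3 => removeVecOf (removeInvOf μs db) dab
    | CT.u => retagInvIe (removeEntryOf μs db) dab
  let μ2 := removeEntryOf μ1 da
  mapVecs (zeroCoordA a) μ2

/-- Reduction of a reticulate cherry `(a,b)` on a μ-representation. -/
def muReduceRet (μs : MuRep n) (a b : Fin n) : MuRep n :=
  let d0a := dlt ({0, a.succ} : Finset (Fin (n + 1)))
  let d0ab := dlt ({0, a.succ, b.succ} : Finset (Fin (n + 1)))
  let da := dlt ({a.succ} : Finset (Fin (n + 1)))
  let db := dlt ({b.succ} : Finset (Fin (n + 1)))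
  let intEnt := internalEntry μs a b
  let μ1 :=
    match muRetType μs a b with
    | CT.r2 => removeEntryOf μs db
    | CT.d => removeEntryOf μs db
    | CT.r3 => removeTaggedOnce (removeInvOf μs db) (d0ab, Tag.ie)
    | CT.u => retagInvIe (removeEntryOf μs db) d0ab
  let μ2 := removeEntryOf μ1 da
  let μ3 := μ2.erase intEnt
  let μ4 := retagTaggedTo μ3 (d0a, Tag.hy) Tag.te
  mapVecs (retAdj a b) μ4

/-- Reduction of a cherry `(a,b)` on a μ-representation. -/
def muReduceCherry (μs : MuRep n) (a b : Fin n) : MuRep n :=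
  if MuTreeCherry μs a b then muReduceTree μs a b
  else if MuRetCherry μs a b then muReduceRet μs a b
  else μs

/-! ## Cherries and reductions on networks -/

namespace Net

/-- The node labelled `a` (meaningful when it exists). -/
def labelNode (N : Net n) (a : Fin n) : ℕ :=
  ((N.V.filter (fun x => N.lbl x = some a)).sort (· ≤ ·)).headI

def inEdges (N : Net n) (x : ℕ) : Finset ℕ :=
  N.E.filter (fun e => N.dir e = true ∧ N.head e = x)

/-- The parent of `x` (meaningful when `x` has in-degree 1). -/
def parentOf (N : Net n) (x : ℕ) : ℕ :=
  N.tail (((N.inEdges x).sort (· ≤ ·)).headI)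

def IsParentOf (N : Net n) (p x : ℕ) : Prop :=
  ∃ e ∈ N.E, N.dir e = true ∧ N.tail e = p ∧ N.head e = x

/-- `(a,b)` is a tree cherry of `N`. -/
def TreeCherry (N : Net n) (a b : Fin n) : Prop :=
  ∃ x y p, N.HasLeaf a x ∧ N.HasLeaf b y ∧ x ≠ y ∧ N.IsParentOf p x ∧ N.IsParentOf p y

/-- `(a,b)` is a reticulate cherry of `N`. -/
def RetCherry (N : Net n) (a b : Fin n) : Prop :=
  ∃ x y pa pb, N.HasLeaf a x ∧ N.HasLeaf b y ∧ x ≠ y ∧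
    N.IsParentOf pa x ∧ N.IsHybrid pa ∧ N.IsParentOf pb y ∧ N.IsParentOf pb pa

def IsCherry (N : Net n) (a b : Fin n) : Prop := N.TreeCherry a b ∨ N.RetCherry a b

/-- The type of a cherry `(a,b)`, read off from the parent of `b`. -/
def cherryType (N : Net n) (a b : Fin n) : CT :=
  let pb := N.parentOf (N.labelNode b)
  if N.IsRootNode pb ∧ N.deg pb = 2 then CT.r2
  else if N.IsRootNode pb ∧ N.deg pb = 3 then CT.r3
  else if 0 < N.undeg pb then CT.u
  else CT.d

def incE (N : Net n) (v : ℕ) : Finset ℕ :=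
  N.E.filter (fun e => N.tail e = v ∨ N.head e = v)

/-- A node is suppressible (Def. of node suppression). -/
def Suppressible (N : Net n) (v : ℕ) : Prop :=
  N.lbl v = none ∧
    ((N.deg v = 2 ∧ ¬ N.IsRootNode v) ∨
      (N.deg v = 1 ∧ N.IsRootNode v ∧ ∀ e ∈ N.incE v, ¬ N.IsHybrid (N.head e)))

/-- Replace the two edges `e1`, `e2` at `v` by the single edge (named `e1`)
from `p` to `c`, directed iff `d`. -/
def replaceEdge (N : Net n) (v e1 e2 p c : ℕ) (d : Bool) : Net n :=
  { V := N.V.erase v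
    E := N.E.erase e2
    tail := Function.update N.tail e1 p
    head := Function.update N.head e1 c
    dir := Function.update N.dir e1 d
    lbl := N.lbl }

/-- Suppress a (suppressible) node of degree 1 or 2. -/
def suppress (N : Net n) (v : ℕ) : Net n :=
  match (N.incE v).sort (· ≤ ·) with
  | [e] => { N with V := N.V.erase v, E := N.E.erase e }
  | [e1, e2] =>
      let o1 := if N.tail e1 = v then N.head e1 else N.tail e1
      let o2 := if N.tail e2 = v then N.head e2 else N.tail e2
      if N.dir e1 = true ∧ N.tail e1 = v then N.replaceEdge v e1 e2 o2 o1 true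
      else if N.dir e2 = true ∧ N.tail e2 = v then N.replaceEdge v e1 e2 o1 o2 true
      else if N.dir e1 = true then N.replaceEdge v e1 e2 o1 o2 true
      else if N.dir e2 = true then N.replaceEdge v e1 e2 o2 o1 true
      else N.replaceEdge v e1 e2 o1 o2 false
  | _ => N

def suppressIf (N : Net n) (v : ℕ) : Net n := if N.Suppressible v then N.suppress v else N

/-- Delete the leaf `x` and its incident edge(s). -/
def deleteLeaf (N : Net n) (x : ℕ) : Net n :=
  { V := N.V.erase x
    E := N.E \ N.incE x
    tail := N.tail
    head := N.head
    dir := N.dir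
    lbl := Function.update N.lbl x none }

/-- Reduction of a tree cherry `(a,b)`. -/
def reduceTree (N : Net n) (a b : Fin n) : Net n :=
  let x := N.labelNode a
  let p := N.parentOf x
  (N.deleteLeaf x).suppressIf p

/-- Reduction of a reticulate cherry `(a,b)`: delete the internal hybrid edge,
suppress `p_b` if suppressible, then suppress `p_a`. -/
def reduceRet (N : Net n) (a b : Fin n) : Net n :=
  let x := N.labelNode a
  let y := N.labelNode b
  let pa := N.parentOf x
  let pb := N.parentOf y
  let eint :=
    ((N.E.filter (fun e => N.dir e = true ∧ N.tail e = pb ∧ N.head e = pa)).sort (· ≤ ·)).headI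
  let N1 : Net n := { N with E := N.E.erase eint }
  ((N1.suppressIf pb).suppress pa)

/-- Reduction of the cherry `(a,b)` in `N`, written `N^{(a,b)}`. -/
def reduceCherry (N : Net n) (a b : Fin n) : Net n :=
  if N.TreeCherry a b then N.reduceTree a b
  else if N.RetCherry a b then N.reduceRet a b
  else N

def reduceSeq (N : Net n) (S : List (Fin n × Fin n)) : Net n :=
  S.foldl (fun M s => M.reduceCherry s.1 s.2) N

def IsRedSeq : Net n → List (Fin n × Fin n) → Prop
  | _, [] => True
  | N, s :: S => N.IsCherry s.1 s.2 ∧ IsRedSeq (N.reduceCherry s.1 s.2) S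

/-- `N` is the trivial forest on `L0`: isolated nodes labelled bijectively by `L0`. -/
def IsTrivialForest (N : Net n) (L0 : Finset (Fin n)) : Prop :=
  N.E = ∅ ∧ (∀ v ∈ N.V, ∃ a ∈ L0, N.lbl v = some a) ∧
    (∀ a ∈ L0, ∃ v ∈ N.V, N.lbl v = some a)

/-- `N` is orchard: some cherry reduction sequence reduces it to a trivial forest. -/
def Orchard (N : Net n) : Prop :=
  ∃ S L0, N.IsRedSeq S ∧ (N.reduceSeq S).IsTrivialForest L0

def freshV (N : Net n) : ℕ := N.V.sup id + 1
def freshE (N : Net n) : ℕ := N.E.sup id + 1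

/-- Addition of the cherry `(a,b)` of kind `k` to `N` (identity if conditions fail). -/
def addCherry (N : Net n) (a b : Fin n) (k : CherryKind) : Net n :=
  let y := N.labelNode b
  let w := N.parentOf y
  let ewb := ((N.inEdges y).sort (· ≤ ·)).headI
  let va := N.freshV
  let vpb := N.freshV + 1
  let e1 := N.freshE
  let e2 := N.freshE + 1
  let x := N.labelNode a
  let pa := N.parentOf x
  let isolated : Prop := y ∈ N.V ∧ N.deg y = 0 ∧ (N.lbl y).isSome
  let nonIsolated : Prop := y ∈ N.V ∧ N.deg y ≠ 0 ∧ (N.lbl y).isSome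
  let resolvedRoot : Prop := N.IsRootNode w ∧ N.deg w = 2
  let aLeaf : Prop := ∃ xx, N.HasLeaf a xx
  match k with
  | CherryKind.Tr2 =>
      if isolated then
        { V := insert vpb (insert va N.V)
          E := insert e2 (insert e1 N.E)
          tail := Function.update (Function.update N.tail e1 vpb) e2 vpb
          head := Function.update (Function.update N.head e1 va) e2 y
          dir := Function.update (Function.update N.dir e1 true) e2 true
          lbl := Function.update N.lbl va (some a) }
      else N
  | CherryKind.Tr3 =>
      if nonIsolated ∧ resolvedRoot then
        { V := insert va N.V
          E := insert e1 N.E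
          tail := Function.update N.tail e1 w
          head := Function.update N.head e1 va
          dir := Function.update N.dir e1 true
          lbl := Function.update N.lbl va (some a) }
      else N
  | CherryKind.Td =>
      if nonIsolated ∧ ¬ resolvedRoot then
        { V := insert vpb (insert va N.V)
          E := insert e2 (insert e1 N.E)
          tail := Function.update (Function.update N.tail e1 vpb) e2 vpb
          head :=
            Function.update (Function.update (Function.update N.head ewb vpb) e1 va) e2 y
          dir := Function.update (Function.update N.dir e1 true) e2 true
          lbl := Function.update N.lbl va (some a) }
      else N
  | CherryKind.Tu =>
      if nonIsolated ∧ ¬ resolvedRoot then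
        { V := insert vpb (insert va N.V)
          E := insert e2 (insert e1 N.E)
          tail := Function.update (Function.update N.tail e1 vpb) e2 vpb
          head :=
            Function.update (Function.update (Function.update N.head ewb vpb) e1 va) e2 y
          dir :=
            Function.update (Function.update (Function.update N.dir ewb false) e1 true) e2 true
          lbl := Function.update N.lbl va (some a) }
      else N
  | CherryKind.Rr2 =>
      if aLeaf ∧ isolated then
        { V := insert vpb N.V
          E := insert e2 (insert e1 N.E)
          tail := Function.update (Function.update N.tail e1 vpb) e2 vpb
          head := Function.update (Function.update N.head e1 pa) e2 y
          dir := Function.update (Function.update N.dir e1 true) e2 true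
          lbl := N.lbl }
      else N
  | CherryKind.Rr3 =>
      if aLeaf ∧ nonIsolated ∧ resolvedRoot then
        { V := N.V
          E := insert e1 N.E
          tail := Function.update N.tail e1 w
          head := Function.update N.head e1 pa
          dir := Function.update N.dir e1 true
          lbl := N.lbl }
      else N
  | CherryKind.Rd =>
      if aLeaf ∧ nonIsolated ∧ ¬ resolvedRoot then
        { V := insert vpb N.V
          E := insert e2 (insert e1 N.E)
          tail := Function.update (Function.update N.tail e1 vpb) e2 vpb
          head :=
            Function.update (Function.update (Function.update N.head ewb vpb) e1 pa) e2 y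
          dir := Function.update (Function.update N.dir e1 true) e2 true
          lbl := N.lbl }
      else N
  | CherryKind.Ru =>
      if aLeaf ∧ nonIsolated ∧ ¬ resolvedRoot then
        { V := insert vpb N.V
          E := insert e2 (insert e1 N.E)
          tail := Function.update (Function.update N.tail e1 vpb) e2 vpb
          head :=
            Function.update (Function.update (Function.update N.head ewb vpb) e1 pa) e2 y
          dir :=
            Function.update (Function.update (Function.update N.dir ewb false) e1 true) e2 true
          lbl := N.lbl }
      else N

/-- Isomorphism of leaf-labelled semidirected networks. -/
def Isom (N M : Net n) : Prop :=
  ∃ f g : ℕ → ℕ,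
    Set.InjOn f ↑N.V ∧ N.V.image f = M.V ∧
    Set.InjOn g ↑N.E ∧ N.E.image g = M.E ∧
    (∀ e ∈ N.E, M.dir (g e) = N.dir e) ∧
    (∀ e ∈ N.E, N.dir e = true →
      M.tail (g e) = f (N.tail e) ∧ M.head (g e) = f (N.head e)) ∧
    (∀ e ∈ N.E, N.dir e = false →
      (M.tail (g e) = f (N.tail e) ∧ M.head (g e) = f (N.head e)) ∨
        (M.tail (g e) = f (N.head e) ∧ M.head (g e) = f (N.tail e))) ∧
    (∀ v ∈ N.V, M.lbl (f v) = N.lbl v)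

/-- `N` is a (complete binary) `L`-network. -/
def Good (N : Net n) : Prop := N.IsLNetwork ∧ N.IsBinary ∧ N.IsComplete

/-- The edge-based μ-dissimilarity: size of the symmetric difference of the
multisets of μ-entries. -/
def dmu (N M : Net n) : ℕ := ((N.muRep - M.muRep) + (M.muRep - N.muRep)).card

/-- `(a,b)` is a reticulate cherry of `N` whose internal and external hybrid
edges are parallel. -/
def ParallelRet (N : Net n) (a b : Fin n) : Prop :=
  ∃ x y pa pb hi he, N.HasLeaf a x ∧ N.HasLeaf b y ∧
    N.IsParentOf pa x ∧ N.IsHybrid pa ∧ N.IsParentOf pb y ∧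
    hi ≠ he ∧ hi ∈ N.E ∧ he ∈ N.E ∧ N.dir hi = true ∧ N.dir he = true ∧
    N.tail hi = pb ∧ N.head hi = pa ∧ N.tail he = pb ∧ N.head he = pa

end Net

/-!
If no leaf is labelled `a`, every μ-vector vanishes in coordinate `a`; otherwise let `x` be that
leaf. Every simple μ-vector of `μ(N)` is a `μ(v)` or a `μ(e, v)` with `v` an endpoint of `e`, the
head if `e` is directed: the vector `μ(T) − μ(e, tail e)` of an admissible edge is `μ(e, head e)`,
since the paths from `tail e` through `e` are `e` followed by the paths from `head e` avoiding `e`.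
Such a vector equals `δ_a` only if `v = x`. A leaf or hybrid `v ≠ x` would count itself in a
coordinate other than `a`; any other `v` has, by binarity, two exits other than `e`, each extending
to a path ending at a leaf or a hybrid, and `δ_a` forces both paths to end at `x` although it
allows only one path to `x`. So `δ_a` lies in the entry of the edge into `x` when `x` has a parent,
and otherwise only in the root entry of `x`.
-/

namespace Net

variable {N : Net n}

lemma src_dst_cases (t : ℕ × Bool) :
    (N.src t = N.tail t.1 ∧ N.dst t = N.head t.1) ∨
      (N.src t = N.head t.1 ∧ N.dst t = N.tail t.1) := by
  rcases t with ⟨e, _ | _⟩ <;> simp [src, dst]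

lemma chain_append_iff {p q : List (ℕ × Bool)} {u x : ℕ} :
    N.chain u (p ++ q) x ↔ ∃ v, N.chain u p v ∧ N.chain v q x := by
  induction p generalizing u with
  | nil => simp [chain]
  | cons s p ih => simp only [List.cons_append, chain, ih, exists_and_left, and_assoc]

lemma chain_mem_E {p : List (ℕ × Bool)} {u x : ℕ} (h : N.chain u p x) {t : ℕ × Bool}
    (ht : t ∈ p) : t.1 ∈ N.E := by
  obtain ⟨p₁, p₂, rfl⟩ := List.append_of_mem ht
  obtain ⟨v, -, hv⟩ := chain_append_iff.1 h
  exact hv.1.1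

lemma chain_end_mem_dst {p : List (ℕ × Bool)} {u x : ℕ} (h : N.chain u p x) (hp : p ≠ []) :
    x ∈ p.map N.dst := by
  obtain ⟨p, s, rfl⟩ := (List.eq_nil_or_concat p).resolve_left hp
  obtain ⟨v, -, hv⟩ := chain_append_iff.1 (List.concat_eq_append ▸ h)
  simp [hv.2.symm]

lemma chain_end_mem_V (hN : N.IsLNetwork) {p : List (ℕ × Bool)} {u x : ℕ} (hu : u ∈ N.V)
    (h : N.chain u p x) : x ∈ N.V := by
  rcases eq_or_ne p [] with rfl | hp
  · exact (show u = x from h) ▸ hu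
  obtain ⟨t, ht, rfl⟩ := List.mem_map.1 (chain_end_mem_dst h hp)
  rcases src_dst_cases (N := N) t with ⟨-, hd⟩ | ⟨-, hd⟩ <;> rw [hd]
  exacts [hN.wfH _ (chain_mem_E h ht), hN.wfT _ (chain_mem_E h ht)]

lemma edges_nodup {p : List (ℕ × Bool)} {u x : ℕ} (h : N.chain u p x)
    (hnd : (u :: p.map N.dst).Nodup) : (p.map Prod.fst).Nodup := by
  induction p generalizing u with
  | nil => exact List.nodup_nil
  | cons s p ih =>
    obtain ⟨hs, hp⟩ := h
    have hnd' := (List.nodup_cons.1 hnd).2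
    refine List.nodup_cons.2 ⟨fun hmem => ?_, ih hp hnd'⟩
    obtain ⟨t, ht, hts⟩ := List.mem_map.1 hmem
    -- a later step along the same edge would revisit `u` or `dst s`
    have hdt : N.dst t = u ∨ N.dst t = N.dst s := by
      rcases src_dst_cases (N := N) s with ⟨h1, h2⟩ | ⟨h1, h2⟩ <;>
        rcases src_dst_cases (N := N) t with ⟨h3, h4⟩ | ⟨h3, h4⟩ <;>
        rw [hts] at h3 h4 <;> rw [← hs.2.2] <;> simp_all
    rcases hdt with hdt | hdt
    · exact (List.nodup_cons.1 hnd).1 (List.mem_cons_of_mem _ (hdt ▸ List.mem_map_of_mem ht))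
    · exact (List.nodup_cons.1 hnd').1 (hdt ▸ List.mem_map_of_mem ht)

lemma Acyclic.not_chain_return (hacy : N.Acyclic) {q : List (ℕ × Bool)} {w z : ℕ}
    {s : ℕ × Bool} (hq : N.chain w q z) (hnd : (w :: q.map N.dst).Nodup)
    (hs : N.stepOK z s) (hsw : N.dst s = w) (hsq : s.1 ∉ q.map Prod.fst) : False := by
  refine hacy (q ++ [s]) ⟨w, by simp, chain_append_iff.2 ⟨z, hq, hs, hsw⟩, ?_, ?_⟩
  · rw [List.map_append, List.map_singleton, hsw, List.nodup_append_comm]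
    exact hnd
  · rw [List.map_append, List.map_singleton, List.nodup_append]
    refine ⟨edges_nodup hq hnd, List.nodup_singleton _, fun a ha b hb hab => hsq ?_⟩
    rw [hab, List.eq_of_mem_singleton hb] at ha
    exact ha

lemma Acyclic.tail_ne_head (hacy : N.Acyclic) {e : ℕ} (he : e ∈ N.E) :
    N.tail e ≠ N.head e := fun h =>
  hacy [(e, true)] ⟨N.tail e, by simp, ⟨⟨he, fun _ => rfl, rfl⟩, h.symm⟩, by simp, by simp⟩

lemma chain_prefix_of_mem {q : List (ℕ × Bool)} {w y v : ℕ} (h : N.chain w q y)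
    (hv : v ∈ w :: q.map N.dst) : ∃ r, r <+: q ∧ N.chain w r v := by
  induction q generalizing w with
  | nil => exact ⟨[], List.prefix_rfl, (List.mem_singleton.1 hv).symm⟩
  | cons s q ih =>
    rcases List.mem_cons.1 hv with rfl | hv
    · exact ⟨[], List.nil_prefix, rfl⟩
    · obtain ⟨r, hr, hc⟩ := ih h.2 hv
      exact ⟨s :: r, List.cons_prefix_cons.2 ⟨rfl, hr⟩, h.1, hc⟩

lemma chain_suffix_of_mem {p : List (ℕ × Bool)} {u x v : ℕ} (h : N.chain u p x)
    (hv : v ∈ u :: p.map N.dst) :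
    ∃ q, q.map Prod.fst <:+ p.map Prod.fst ∧ (v :: q.map N.dst) <:+ (u :: p.map N.dst) ∧
      N.chain v q x := by
  induction p generalizing u with
  | nil => exact ⟨[], List.suffix_rfl, by simp [(List.mem_singleton.1 hv).symm],
    (List.mem_singleton.1 hv).trans h⟩
  | cons s p ih =>
    rcases List.mem_cons.1 hv with rfl | hv
    · exact ⟨s :: p, List.suffix_rfl, List.suffix_rfl, h⟩
    · obtain ⟨q, hq, hqv, hc⟩ := ih h.2 hv
      exact ⟨q, hq.trans (List.suffix_cons _ _), hqv.trans (List.suffix_cons _ _), hc⟩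

lemma IsPath.snoc (hacy : N.Acyclic) {p : List (ℕ × Bool)} {u x : ℕ} {s : ℕ × Bool}
    (hp : N.IsPath u x p) (hs : N.stepOK x s) (hsp : s.1 ∉ p.map Prod.fst) :
    N.IsPath u (N.dst s) (p ++ [s]) := by
  refine ⟨hp.1, chain_append_iff.2 ⟨x, hp.2.1, hs, rfl⟩, ?_⟩
  rw [List.map_append, List.map_singleton, ← List.cons_append, List.nodup_append]
  refine ⟨hp.2.2, List.nodup_singleton _, fun v hv w hw hvw => ?_⟩
  obtain ⟨q, hqp, hqv, hq⟩ := chain_suffix_of_mem hp.2.1 hv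
  rw [List.eq_of_mem_singleton hw] at hvw
  exact hacy.not_chain_return hq (hqv.sublist.nodup hp.2.2) hs hvw.symm
    (fun h => hsp (hqp.subset h))

lemma IsPath.cons (hacy : N.Acyclic) {q : List (ℕ × Bool)} {u w y : ℕ} {s : ℕ × Bool}
    (hq : N.IsPath w y q) (hu : u ∈ N.V) (hs : N.stepOK u s) (hsw : N.dst s = w)
    (hsq : s.1 ∉ q.map Prod.fst) : N.IsPath u y (s :: q) := by
  refine ⟨hu, ⟨hs, hsw ▸ hq.2.1⟩, ?_⟩
  rw [List.map_cons, hsw]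
  refine List.nodup_cons.2 ⟨fun hmem => ?_, hq.2.2⟩
  obtain ⟨r, hrq, hr⟩ := chain_prefix_of_mem hq.2.1 hmem
  have hrq' : (w :: r.map N.dst) <+: (w :: q.map N.dst) :=
    List.cons_prefix_cons.2 ⟨rfl, hrq.map _⟩
  exact hacy.not_chain_return hr (hrq'.sublist.nodup hq.2.2) hs hsw
    (fun h => hsq ((hrq.map _).subset h))

lemma IsPath.eq_cons_of_mem {p : List (ℕ × Bool)} {v y : ℕ} (hp : N.IsPath v y p)
    {t : ℕ × Bool} (ht : t ∈ p) (hinc : N.tail t.1 = v ∨ N.head t.1 = v) :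
    ∃ q, p = t :: q := by
  have hv : v ∉ p.map N.dst := (List.nodup_cons.1 hp.2.2).1
  obtain ⟨p₁, p₂, rfl⟩ := List.append_of_mem ht
  obtain ⟨z, hp₁, hz⟩ := chain_append_iff.1 hp.2.1
  have hsrc : N.src t = v := by
    rcases src_dst_cases (N := N) t with ⟨h1, h2⟩ | ⟨h1, h2⟩ <;> rcases hinc with h | h
    all_goals first
      | exact h1.trans h
      | exact absurd (List.mem_map_of_mem ht) (h2.trans h ▸ hv)
  rcases eq_or_ne p₁ [] with rfl | hne
  · exact ⟨p₂, rfl⟩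
  · refine absurd ?_ hv
    rw [List.map_append]
    exact List.mem_append_left _ (hz.1.2.2.symm.trans hsrc ▸ chain_end_mem_dst hp₁ hne)

lemma IsPath.src_ne_end {p : List (ℕ × Bool)} {u y : ℕ} (hp : N.IsPath u y p)
    {t : ℕ × Bool} (ht : t ∈ p) : N.src t ≠ y := by
  obtain ⟨p₁, p₂, rfl⟩ := List.append_of_mem ht
  obtain ⟨z, hp₁, hz⟩ := chain_append_iff.1 hp.2.1
  have hnd := hp.2.2
  rw [List.map_append, ← List.cons_append, List.nodup_append] at hnd
  rw [hz.1.2.2]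
  refine fun hzy => hnd.2.2 z ?_ z ?_ rfl
  · rcases eq_or_ne p₁ [] with rfl | hne
    · exact List.mem_singleton.2 hp₁.symm
    · exact List.mem_cons_of_mem _ (chain_end_mem_dst hp₁ hne)
  · exact hzy ▸ chain_end_mem_dst hz (List.cons_ne_nil t p₂)

lemma IsPath.end_mem_V (hN : N.IsLNetwork) {p : List (ℕ × Bool)} {u y : ℕ}
    (hp : N.IsPath u y p) : y ∈ N.V :=
  chain_end_mem_V hN hp.1 hp.2.1

lemma IsPath.length_lt (hN : N.IsLNetwork) {p : List (ℕ × Bool)} {u y : ℕ}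
    (hp : N.IsPath u y p) : p.length < N.V.card := by
  have hsub : (u :: p.map N.dst).toFinset ⊆ N.V := by
    intro z hz
    obtain ⟨r, -, hr⟩ := chain_prefix_of_mem hp.2.1 (List.mem_toFinset.1 hz)
    exact chain_end_mem_V hN hp.1 hr
  have := Finset.card_le_card hsub
  rw [List.toFinset_card_of_nodup hp.2.2] at this
  simpa using this

lemma paths_finite (hN : N.IsLNetwork) (u y : ℕ) : (N.paths u y).Finite := by
  have hE : {s : ℕ × Bool | s.1 ∈ N.E}.Finite :=
    (N.E.finite_toSet.prod (Set.finite_univ (α := Bool))).subset fun s hs => ⟨hs, trivial⟩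
  have : Finite {s : ℕ × Bool // s.1 ∈ N.E} := hE.to_subtype
  refine ((List.finite_length_le {s : ℕ × Bool // s.1 ∈ N.E} N.V.card).image
    (List.map Subtype.val)).subset ?_
  intro p hp
  lift p to List {s : ℕ × Bool // s.1 ∈ N.E} using fun t ht => chain_mem_E hp.2.1 ht
  exact ⟨p, by simpa using (hp.length_lt hN).le, rfl⟩

lemma pathsAvoid_finite (hN : N.IsLNetwork) (v y e : ℕ) : (N.pathsAvoid v y e).Finite :=
  (paths_finite hN v y).subset fun _ hp => hp.1

def exitEdges (N : Net n) (w : ℕ) : Finset ℕ :=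
  N.E.filter fun f => (N.dir f = true ∧ N.tail f = w) ∨
    (N.dir f = false ∧ (N.tail f = w ∨ N.head f = w))

lemma card_exitEdges (w : ℕ) : (N.exitEdges w).card = N.outdeg w + N.undeg w := by
  rw [exitEdges, Finset.filter_or, Finset.card_union_of_disjoint, outdeg, undeg]
  exact Finset.disjoint_filter.2 fun f _ h1 h2 => by simp [h1.1] at h2

lemma exists_stepOK_of_mem_exitEdges {w f : ℕ} (hf : f ∈ N.exitEdges w) :
    ∃ s : ℕ × Bool, N.stepOK w s ∧ s.1 = f := by
  obtain ⟨hfE, hf⟩ := Finset.mem_filter.1 hf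
  by_cases ht : N.tail f = w
  · exact ⟨(f, true), ⟨hfE, fun _ => rfl, ht⟩, rfl⟩
  · obtain ⟨hd, hh⟩ : N.dir f = false ∧ N.head f = w := by tauto
    exact ⟨(f, false), ⟨hfE, by simp [hd], hh⟩, rfl⟩

lemma mem_exitEdges_of_stepOK {w : ℕ} {s : ℕ × Bool} (hs : N.stepOK w s) :
    s.1 ∈ N.exitEdges w := by
  obtain ⟨hE, hdir, hsrc⟩ := hs
  refine Finset.mem_filter.2 ⟨hE, ?_⟩
  rcases s with ⟨f, _ | _⟩ <;> cases hd : N.dir f <;> simp_all [src]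

lemma incident_of_mem_exitEdges {w f : ℕ} (hf : f ∈ N.exitEdges w) :
    N.tail f = w ∨ N.head f = w := by
  obtain ⟨-, ⟨-, ht⟩ | ⟨-, h⟩⟩ := Finset.mem_filter.1 hf
  exacts [Or.inl ht, h]

/-- The nodes counted by the coordinates of μ-vectors. -/
def IsTerminal (N : Net n) (v : ℕ) : Prop := N.IsLeafNode v ∨ N.IsHybrid v

lemma two_le_card_exitEdges (hN : N.IsBinary) {v : ℕ} (hv : v ∈ N.V)
    (hterm : ¬N.IsTerminal v) : 2 ≤ (N.exitEdges v).card := by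
  rw [card_exitEdges]
  obtain ⟨hroot, -, hother⟩ := hN v hv
  have hleaf : ¬N.IsLeafNode v := fun h => hterm (Or.inl h)
  have hin : N.indeg v ≤ 1 := by
    by_contra h
    exact hterm (Or.inr (by unfold IsHybrid; omega))
  by_cases hr : N.IsRootNode v
  · have hout : N.outdeg v ≠ 0 := fun h => hleaf ⟨hv, h, hr.2.2⟩
    have := hr.2
    rcases hroot hr with h | h | h <;> unfold deg at h <;> omega
  · have := hother hr hleaf
    unfold deg at this
    omega

-- an endpoint of an undirected edge lies in a nontrivial class, which completeness makes a
-- root class: so it has no incoming edge, and degree 3 since it is neither root nor leaf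
lemma card_exitEdges_of_undirected (hN : N.Good) {e v : ℕ} (he : e ∈ N.E)
    (hd : N.dir e = false) (hv : N.tail e = v ∨ N.head e = v) :
    (N.exitEdges v).card = 3 := by
  obtain ⟨hLN, hbin, hcompl⟩ := hN
  have hvV : v ∈ N.V := by rcases hv with rfl | rfl; exacts [hLN.wfT e he, hLN.wfH e he]
  have hleaf : ¬N.IsLeafNode v := by
    rcases hv with rfl | rfl; exacts [(hcompl.1 e he hd).1, (hcompl.1 e he hd).2]
  have hund : N.undeg v ≠ 0 := Finset.card_ne_zero.2 ⟨e, Finset.mem_filter.2 ⟨he, hd, hv⟩⟩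
  have hnontriv : ¬N.TrivialClass v := fun htriv => by
    have hloop := hLN.acyclic.tail_ne_head he
    rcases hv with rfl | rfl
    · exact hloop (htriv _ (.single ⟨e, he, hd, Or.inl ⟨rfl, rfl⟩⟩)).symm
    · exact hloop (htriv _ (.single ⟨e, he, hd, Or.inr ⟨rfl, rfl⟩⟩))
  have hin : N.indeg v = 0 := Finset.card_eq_zero.2 (Finset.filter_eq_empty_iff.2
    fun g hg ⟨hgd, hgv⟩ => hcompl.2 v hvV hnontriv g hg hgd (hgv ▸ .refl))
  have hdeg := (hbin v hvV).2.2 (fun hr => hund hr.2.2) hleaf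
  rw [card_exitEdges]
  unfold deg at hdeg
  omega

lemma exists_exit_not_mem (hN : N.IsBinary) {p : List (ℕ × Bool)} {u w : ℕ}
    (hp : N.IsPath u w p) (hw : w ∈ N.V) (hterm : ¬N.IsTerminal w) :
    ∃ f ∈ N.exitEdges w, f ∉ p.map Prod.fst := by
  obtain ⟨f₁, hf₁, f₂, hf₂, hne⟩ :=
    Finset.one_lt_card.1 (two_le_card_exitEdges hN hw hterm)
  -- an edge of `p` at the endpoint `w` is traversed into `w`, and only one step enters `w`
  have entering : ∀ f ∈ N.exitEdges w, f ∈ p.map Prod.fst →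
      ∃ t ∈ p, t.1 = f ∧ N.dst t = w := by
    intro f hf hfp
    obtain ⟨t, ht, rfl⟩ := List.mem_map.1 hfp
    refine ⟨t, ht, rfl, ?_⟩
    have hsrc := hp.src_ne_end ht
    rcases src_dst_cases (N := N) t with ⟨h1, h2⟩ | ⟨h1, h2⟩ <;>
      rcases incident_of_mem_exitEdges hf with h | h <;> simp_all
  by_contra! hall
  obtain ⟨t₁, ht₁, rfl, hd₁⟩ := entering _ hf₁ (hall _ hf₁)
  obtain ⟨t₂, ht₂, rfl, hd₂⟩ := entering _ hf₂ (hall _ hf₂)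
  exact hne (congrArg Prod.fst
    (List.inj_on_of_nodup_map (List.nodup_cons.1 hp.2.2).2 ht₁ ht₂ (hd₁.trans hd₂.symm)))

lemma exists_terminal_extension (hN : N.Good) {p : List (ℕ × Bool)} {u w : ℕ}
    (hp : N.IsPath u w p) : ∃ q y, N.IsPath u y (p ++ q) ∧ N.IsTerminal y := by
  by_cases hw : N.IsTerminal w
  · exact ⟨[], w, by simpa using hp, hw⟩
  obtain ⟨f, hf, hfp⟩ := exists_exit_not_mem hN.2.1 hp (hp.end_mem_V hN.1) hw
  obtain ⟨s, hs, rfl⟩ := exists_stepOK_of_mem_exitEdges hf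
  have hps := hp.snoc hN.1.acyclic hs hfp
  obtain ⟨q, y, hq, hy⟩ := exists_terminal_extension hN hps
  exact ⟨s :: q, y, by simpa using hq, hy⟩
termination_by N.V.card - p.length
decreasing_by
  have := hps.length_lt hN.1
  simp only [List.length_append, List.length_singleton] at this ⊢
  omega

lemma exists_terminal_extension_of_mem_exitEdges (hN : N.Good) {p : List (ℕ × Bool)}
    {u w f : ℕ} (hp : N.IsPath u w p) (hf : f ∈ N.exitEdges w) (hfp : f ∉ p.map Prod.fst) :
    ∃ s q y, s.1 = f ∧ N.IsPath u y (p ++ s :: q) ∧ N.IsTerminal y := by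
  obtain ⟨s, hs, rfl⟩ := exists_stepOK_of_mem_exitEdges hf
  obtain ⟨q, y, hq, hy⟩ := exists_terminal_extension hN (hp.snoc hN.1.acyclic hs hfp)
  exact ⟨s, q, y, rfl, by simpa using hq, hy⟩

lemma IsLeafNode.not_stepOK {x : ℕ} (hx : N.IsLeafNode x) (s : ℕ × Bool) :
    ¬N.stepOK x s := fun hs => by
  have := Finset.card_pos.2 ⟨_, mem_exitEdges_of_stepOK hs⟩
  rw [card_exitEdges, hx.2.1, hx.2.2] at this
  exact lt_irrefl 0 this

lemma IsLeafNode.mAvoid_eq {x : ℕ} (hx : N.IsLeafNode x) (y e : ℕ) :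
    N.mAvoid x y e = if y = x then 1 else 0 := by
  have hpaths : ∀ p, p ∈ N.pathsAvoid x y e ↔ p = [] ∧ y = x := by
    rintro (_ | ⟨s, p⟩)
    · simp [pathsAvoid, IsPath, chain, hx.1, eq_comm]
    · simpa [pathsAvoid, IsPath, chain] using fun _ hs => absurd hs (hx.not_stepOK s)
  unfold mAvoid
  split_ifs with hy
  · exact Set.ncard_eq_one.2 ⟨[], Set.ext fun p => (hpaths p).trans (by simp [hy])⟩
  · rw [show N.pathsAvoid x y e = ∅ from Set.ext fun p => (hpaths p).trans (by simp [hy])]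
    exact Set.ncard_empty _

lemma IsLNetwork.isLeafNode_of_hasLeaf (hN : N.IsLNetwork) {a : Fin n} {x : ℕ}
    (hx : N.HasLeaf a x) : N.IsLeafNode x :=
  (hN.lblLeaf x hx.1).1 (by simp [hx.2])

lemma IsLNetwork.not_isHybrid_of_isLeafNode (hN : N.IsLNetwork) {x : ℕ}
    (hx : N.IsLeafNode x) : ¬N.IsHybrid x := by
  have := hN.leavesTree x hx
  unfold IsTreeNode at this
  unfold IsHybrid
  omega

lemma IsLNetwork.mToLblAvoid_of_hasLeaf (hN : N.IsLNetwork) {b : Fin n} {y : ℕ}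
    (hy : N.HasLeaf b y) (v e : ℕ) : N.mToLblAvoid v b e = N.mAvoid v y e := by
  have : N.V.filter (fun z => N.lbl z = some b) = {y} := by
    ext z
    simp only [Finset.mem_filter, Finset.mem_singleton]
    refine ⟨fun ⟨hz, hzb⟩ => hN.lblInj z hz y hy.1 (by simp [hzb]) (hzb.trans hy.2.symm),
      ?_⟩
    rintro rfl
    exact hy
  rw [mToLblAvoid, this, Finset.sum_singleton]

lemma muAt_of_hasLeaf (hN : N.IsLNetwork) {a : Fin n} {x : ℕ} (hx : N.HasLeaf a x)
    (e : ℕ) : N.muAt e x = dlt {a.succ} := by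
  have hl := hN.isLeafNode_of_hasLeaf hx
  funext i
  induction i using Fin.cases with
  | zero =>
    have : x ∉ N.Hybs := fun h => hN.not_isHybrid_of_isLeafNode hl (Finset.mem_filter.1 h).2
    simp [muAt, dlt, hl.mAvoid_eq, this, (Fin.succ_ne_zero a).symm]
  | succ b =>
    simp [muAt, mToLblAvoid, hl.mAvoid_eq, dlt, hx.1, hx.2, eq_comm]

lemma muAt_of_not_mem {e : ℕ} (he : e ∉ N.E) (v : ℕ) : N.muAt e v = N.muFrom v := by
  have : ∀ y, N.pathsAvoid v y e = N.paths v y := fun y => Set.ext fun p =>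
    ⟨And.left, fun hp => ⟨hp, fun hm => by
      obtain ⟨t, ht, rfl⟩ := List.mem_map.1 hm
      exact he (chain_mem_E hp.2.1 ht)⟩⟩
  unfold muAt muFrom mToLblAvoid mToLbl mAvoid m
  simp only [this]

-- a path from `tail e` that uses `e` must start with it, and acyclicity lets every path from
-- `head e` avoiding `e` be prefixed by `e`
lemma paths_tail_eq (hN : N.IsLNetwork) {e : ℕ} (he : e ∈ N.E) (hd : N.dir e = true)
    (y : ℕ) : N.paths (N.tail e) y =
      N.pathsAvoid (N.tail e) y e ∪ List.cons (e, true) '' N.pathsAvoid (N.head e) y e := by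
  ext p
  refine ⟨fun hp => ?_, ?_⟩
  · by_cases hm : e ∈ p.map Prod.fst
    · right
      obtain ⟨t, ht, rfl⟩ := List.mem_map.1 hm
      obtain ⟨q, rfl⟩ := hp.eq_cons_of_mem ht (Or.inl rfl)
      have ht2 : t = (t.1, true) := Prod.ext rfl (hp.2.1.1.2.1 hd)
      have hedges := List.nodup_cons.1 (edges_nodup hp.2.1 hp.2.2)
      rw [ht2] at hp ⊢
      exact ⟨q, ⟨⟨hN.wfH _ he, hp.2.1.2, (List.nodup_cons.1 hp.2.2).2⟩, hedges.1⟩, rfl⟩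
    · exact Or.inl ⟨hp, hm⟩
  · rintro (hp | ⟨q, hq, rfl⟩)
    · exact hp.1
    · exact hq.1.cons hN.acyclic (hN.wfT e he) ⟨he, fun _ => rfl, rfl⟩ rfl hq.2

lemma m_tail_eq_mAvoid_add (hN : N.IsLNetwork) {e : ℕ} (he : e ∈ N.E) (hd : N.dir e = true)
    (y : ℕ) : N.m (N.tail e) y = N.mAvoid (N.tail e) y e + N.mAvoid (N.head e) y e := by
  have hdisj : Disjoint (N.pathsAvoid (N.tail e) y e)
      (List.cons (e, true) '' N.pathsAvoid (N.head e) y e) :=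
    Set.disjoint_left.2 fun p hp ⟨q, _, hq⟩ => hp.2 (by simp [← hq])
  rw [m, paths_tail_eq hN he hd, Set.ncard_union_eq hdisj (pathsAvoid_finite hN _ _ _)
    ((pathsAvoid_finite hN _ _ _).image _), Set.ncard_image_of_injective _ List.cons_injective,
    mAvoid, mAvoid]

lemma muFrom_tail_sub_muAt_tail (hN : N.IsLNetwork) {e : ℕ} (he : e ∈ N.E)
    (hd : N.dir e = true) :
    (fun i => N.muFrom (N.tail e) i - N.muAt e (N.tail e) i) = N.muAt e (N.head e) := by
  funext i
  induction i using Fin.cases <;>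
    simp [muFrom, muAt, mToLbl, mToLblAvoid, m_tail_eq_mAvoid_add hN he hd, Finset.sum_add_distrib]

lemma eq_muAt_of_mem_muEntryEdge (hN : N.IsLNetwork) {e : ℕ} (he : e ∈ N.E) {m : MuVec n}
    {t : Tag} (hm : (m, t) ∈ N.muEntryEdge e) :
    (N.dir e = true ∧ m = N.muAt e (N.head e)) ∨
      (N.dir e = false ∧ ∃ v, (N.tail e = v ∨ N.head e = v) ∧ m = N.muAt e v) := by
  unfold muEntryEdge at hm
  rcases hd : N.dir e with _ | _ <;> simp only [hd] at hm
  · simp only [Bool.false_eq_true, if_false, Multiset.insert_eq_cons, Multiset.mem_cons,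
      Multiset.mem_singleton, Prod.mk.injEq] at hm
    rcases hm with ⟨rfl, -⟩ | ⟨rfl, -⟩
    exacts [Or.inr ⟨rfl, _, Or.inr rfl, rfl⟩, Or.inr ⟨rfl, _, Or.inl rfl, rfl⟩]
  · refine Or.inl ⟨rfl, ?_⟩
    split_ifs at hm <;> simp only [Multiset.insert_eq_cons, Multiset.mem_cons,
      Multiset.mem_singleton, Prod.mk.injEq] at hm
    all_goals rcases hm with ⟨rfl, -⟩ | ⟨rfl, -⟩ <;>
      first | rfl | exact muFrom_tail_sub_muAt_tail hN he hd

lemma exists_muAt_of_mem_muRep (hN : N.IsLNetwork) {ent : MuEntry n} (hent : ent ∈ N.muRep)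
    {m : MuVec n} {t : Tag} (hm : (m, t) ∈ ent) : ∃ e v, m = N.muAt e v := by
  rcases Multiset.mem_add.1 hent with hent | hent
  · obtain ⟨e, he, rfl⟩ := Multiset.mem_map.1 hent
    rcases eq_muAt_of_mem_muEntryEdge hN he hm with ⟨-, h⟩ | ⟨-, v, -, h⟩
    exacts [⟨e, _, h⟩, ⟨e, v, h⟩]
  · obtain ⟨v, -, rfl⟩ := Multiset.mem_map.1 hent
    obtain ⟨e, he⟩ := Infinite.exists_notMem_finset N.E
    exact ⟨e, v, by rw [muAt_of_not_mem he, (Prod.mk.inj (Multiset.mem_singleton.1 hm)).1]⟩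

lemma multVec_dlt_eq_zero (hN : N.IsLNetwork) {a : Fin n} (ha : ∀ x, ¬N.HasLeaf a x) :
    multVec N.muRep (dlt {a.succ}) = 0 := by
  refine Multiset.countP_eq_zero.2 fun ent hent ⟨t, hm⟩ => ?_
  obtain ⟨e, v, h⟩ := exists_muAt_of_mem_muRep hN hent hm
  have hcoord := congrFun h a.succ
  have hempty : N.V.filter (fun z => N.lbl z = some a) = ∅ :=
    Finset.filter_eq_empty_iff.2 fun z hz hza => ha z ⟨hz, hza⟩
  simp [dlt, muAt, mToLblAvoid, hempty] at hcoord

lemma undeg_ne_zero_of_ustep {v w : ℕ} (h : N.ustep v w) :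
    N.undeg v ≠ 0 ∧ N.undeg w ≠ 0 := by
  obtain ⟨e, he, hd, h⟩ := h
  constructor <;> exact Finset.card_ne_zero.2 ⟨e, Finset.mem_filter.2 ⟨he, hd, by tauto⟩⟩

lemma eq_of_undirConn_of_undeg_eq_zero {x v : ℕ} (hx : N.undeg x = 0) :
    N.UndirConn v x ∨ N.UndirConn x v → v = x := by
  rintro (h | h)
  · rcases h.cases_tail with rfl | ⟨c, -, hc⟩
    exacts [rfl, absurd hx (undeg_ne_zero_of_ustep hc).2]
  · rcases h.cases_head with rfl | ⟨c, hc, -⟩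
    exacts [rfl, absurd hx (undeg_ne_zero_of_ustep hc).1]

lemma mem_rootClassReps_iff {x : ℕ} (hxV : x ∈ N.V) (hx : N.undeg x = 0) :
    x ∈ N.V.filter (fun v => N.IsRootClass v ∧ ∀ w ∈ N.V, N.UndirConn v w → v ≤ w) ↔
      N.indeg x = 0 := by
  rw [Finset.mem_filter, IsRootClass]
  simp only [hxV, true_and]
  refine ⟨fun ⟨hroot, _⟩ => Finset.card_eq_zero.2 (Finset.filter_eq_empty_iff.2
    fun e he ⟨hd, hex⟩ => hroot e he hd (hex ▸ .refl)), fun h0 => ⟨?_, ?_⟩⟩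
  · intro e he hd hconn
    have hex := eq_of_undirConn_of_undeg_eq_zero hx (Or.inl hconn)
    exact Finset.card_ne_zero.2 ⟨e, Finset.mem_filter.2 ⟨he, hd, hex⟩⟩ h0
  · exact fun w _ hconn => (eq_of_undirConn_of_undeg_eq_zero hx (Or.inr hconn)).ge

section DeltaVector

variable {a : Fin n} {x : ℕ}

lemma eq_of_muAt_eq_dlt_of_mem_pathsAvoid (hN : N.IsLNetwork) (hx : N.HasLeaf a x)
    {e v : ℕ} (h : N.muAt e v = dlt {a.succ}) {y : ℕ} {p : List (ℕ × Bool)}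
    (hp : p ∈ N.pathsAvoid v y e) (hy : N.IsTerminal y) : y = x := by
  have hyV := hp.1.end_mem_V hN
  have hpos : N.mAvoid v y e ≠ 0 :=
    ((Set.ncard_pos (pathsAvoid_finite hN v y e)).2 ⟨p, hp⟩).ne'
  rcases hy with hy | hy
  · obtain ⟨b, hb⟩ := Option.isSome_iff_exists.1 ((hN.lblLeaf y hyV).2 hy)
    have hcoord := congrFun h b.succ
    simp only [muAt, Fin.cases_succ, hN.mToLblAvoid_of_hasLeaf ⟨hyV, hb⟩, dlt,
      Finset.mem_singleton, Fin.succ_inj] at hcoord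
    split_ifs at hcoord with hba
    · exact hN.lblInj y hyV x hx.1 (by simp [hb]) (by rw [hb, hba, hx.2])
    · exact absurd hcoord hpos
  · have hcoord := congrFun h 0
    simp only [muAt, Fin.cases_zero, dlt, Finset.mem_singleton, (Fin.succ_ne_zero a).symm,
      if_false, Finset.sum_eq_zero_iff] at hcoord
    exact absurd (hcoord y (Finset.mem_filter.2 ⟨hyV, hy⟩)) hpos

lemma mAvoid_eq_one_of_muAt_eq_dlt (hN : N.IsLNetwork) (hx : N.HasLeaf a x) {e v : ℕ}
    (h : N.muAt e v = dlt {a.succ}) : N.mAvoid v x e = 1 := by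
  have hcoord := congrFun h a.succ
  simpa [muAt, hN.mToLblAvoid_of_hasLeaf hx, dlt] using hcoord

lemma eq_of_muAt_eq_dlt (hN : N.Good) (hx : N.HasLeaf a x) {e v : ℕ} (hv : v ∈ N.V)
    (hinc : e ∈ N.E → N.tail e = v ∨ N.head e = v)
    (hbranch : ¬N.IsTerminal v → 2 ≤ ((N.exitEdges v).erase e).card)
    (h : N.muAt e v = dlt {a.succ}) : v = x := by
  have hnil : N.IsPath v v [] := ⟨hv, rfl, List.nodup_singleton v⟩
  by_cases hterm : N.IsTerminal v
  · exact eq_of_muAt_eq_dlt_of_mem_pathsAvoid hN.1 hx h ⟨hnil, List.not_mem_nil⟩ hterm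
  -- two exits other than `e` lead to two distinct paths to `x` avoiding `e`
  have reach : ∀ f ∈ (N.exitEdges v).erase e,
      ∃ s q, s.1 = f ∧ s :: q ∈ N.pathsAvoid v x e := by
    intro f hf
    obtain ⟨s, q, y, rfl, hq, hy⟩ := exists_terminal_extension_of_mem_exitEdges hN hnil
      (Finset.mem_of_mem_erase hf) List.not_mem_nil
    rw [List.nil_append] at hq
    have havoid : e ∉ (s :: q).map Prod.fst := by
      intro hm
      obtain ⟨t, ht, rfl⟩ := List.mem_map.1 hm
      obtain ⟨q', hq'⟩ := hq.eq_cons_of_mem ht (hinc (chain_mem_E hq.2.1 ht))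
      exact Finset.ne_of_mem_erase hf (by rw [(List.cons_eq_cons.1 hq').1])
    have hyx := eq_of_muAt_eq_dlt_of_mem_pathsAvoid hN.1 hx h ⟨hq, havoid⟩ hy
    exact ⟨s, q, rfl, hyx ▸ ⟨hq, havoid⟩⟩
  obtain ⟨f₁, hf₁, f₂, hf₂, hne⟩ := Finset.one_lt_card.1 (hbranch hterm)
  obtain ⟨s₁, q₁, rfl, hp₁⟩ := reach f₁ hf₁
  obtain ⟨s₂, q₂, rfl, hp₂⟩ := reach f₂ hf₂
  obtain ⟨p, hp⟩ := Set.ncard_eq_one.1 (mAvoid_eq_one_of_muAt_eq_dlt hN.1 hx h)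
  rw [hp, Set.mem_singleton_iff] at hp₁ hp₂
  exact absurd (congrArg Prod.fst (List.cons_eq_cons.1 (hp₁.trans hp₂.symm)).1) hne

lemma eq_of_muFrom_eq_dlt (hN : N.Good) (hx : N.HasLeaf a x) {v : ℕ} (hv : v ∈ N.V)
    (h : N.muFrom v = dlt {a.succ}) : v = x := by
  obtain ⟨e, he⟩ := Infinite.exists_notMem_finset N.E
  rw [← muAt_of_not_mem he] at h
  refine eq_of_muAt_eq_dlt hN hx hv (fun h => absurd h he) (fun hterm => ?_) h
  have : e ∉ N.exitEdges v := fun h => he (Finset.filter_subset _ _ h)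
  rw [Finset.erase_eq_of_notMem this]
  exact two_le_card_exitEdges hN.2.1 hv hterm

lemma eq_of_muAt_head_eq_dlt (hN : N.Good) (hx : N.HasLeaf a x) {e : ℕ} (he : e ∈ N.E)
    (hd : N.dir e = true) (h : N.muAt e (N.head e) = dlt {a.succ}) : N.head e = x := by
  refine eq_of_muAt_eq_dlt hN hx (hN.1.wfH e he) (fun _ => Or.inr rfl) (fun hterm => ?_) h
  have : e ∉ N.exitEdges (N.head e) := fun hm => by
    rcases incident_of_mem_exitEdges hm with h | h
    · exact hN.1.acyclic.tail_ne_head he h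
    · obtain ⟨-, ⟨-, h'⟩ | ⟨h', -⟩⟩ := Finset.mem_filter.1 hm
      · exact hN.1.acyclic.tail_ne_head he h'
      · simp [hd] at h'
  rw [Finset.erase_eq_of_notMem this]
  exact two_le_card_exitEdges hN.2.1 (hN.1.wfH e he) hterm

lemma muAt_ne_dlt_of_undirected (hN : N.Good) (hx : N.HasLeaf a x) {e v : ℕ} (he : e ∈ N.E)
    (hd : N.dir e = false) (hv : N.tail e = v ∨ N.head e = v) :
    N.muAt e v ≠ dlt {a.succ} := fun h => by
  have hvx : v = x := by
    refine eq_of_muAt_eq_dlt hN hx ?_ (fun _ => hv) (fun _ => ?_) h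
    · rcases hv with rfl | rfl; exacts [hN.1.wfT e he, hN.1.wfH e he]
    · have hmem : e ∈ N.exitEdges v := Finset.mem_filter.2 ⟨he, Or.inr ⟨hd, hv⟩⟩
      rw [Finset.card_erase_of_mem hmem,
        card_exitEdges_of_undirected hN he hd hv]
  have hleaf := hN.1.isLeafNode_of_hasLeaf hx
  rcases hv with rfl | rfl
  exacts [(hN.2.2.1 e he hd).1 (hvx ▸ hleaf), (hN.2.2.1 e he hd).2 (hvx ▸ hleaf)]

lemma muFrom_of_hasLeaf (hN : N.IsLNetwork) (hx : N.HasLeaf a x) :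
    N.muFrom x = dlt {a.succ} := by
  obtain ⟨e, he⟩ := Infinite.exists_notMem_finset N.E
  rw [← muAt_of_not_mem he, muAt_of_hasLeaf hN hx]

lemma dlt_mem_muEntryEdge_iff (hN : N.Good) (hx : N.HasLeaf a x) {e : ℕ} (he : e ∈ N.E) :
    (∃ t, (dlt {a.succ}, t) ∈ N.muEntryEdge e) ↔ N.dir e = true ∧ N.head e = x := by
  refine ⟨fun ⟨t, hm⟩ => ?_, fun ⟨hd, hex⟩ => ?_⟩
  · rcases eq_muAt_of_mem_muEntryEdge hN.1 he hm with ⟨hd, h⟩ | ⟨hd, v, hv, h⟩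
    · exact ⟨hd, eq_of_muAt_head_eq_dlt hN hx he hd h.symm⟩
    · exact absurd h.symm (muAt_ne_dlt_of_undirected hN hx he hd hv)
  · rw [← muAt_of_hasLeaf hN.1 hx e, ← hex]
    unfold muEntryEdge
    simp only [hd, if_true]
    split_ifs <;> simp

lemma countP_edgeEntries_dlt (hN : N.Good) (hx : N.HasLeaf a x) :
    (N.E.val.map N.muEntryEdge).countP (fun ent => ∃ t, (dlt {a.succ}, t) ∈ ent) =
      N.indeg x := by
  rw [Multiset.countP_map, indeg, Finset.card, Finset.filter_val]
  exact congrArg _ (Multiset.filter_congr fun e he => dlt_mem_muEntryEdge_iff hN hx he)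

lemma countP_rootEntries_dlt (hN : N.Good) (hx : N.HasLeaf a x) :
    N.rootEntries.countP (fun ent => ∃ t, (dlt {a.succ}, t) ∈ ent) =
      if N.indeg x = 0 then 1 else 0 := by
  rw [rootEntries, Multiset.countP_map, ← Finset.filter_val, ← Finset.card]
  have hiff :
      ∀ v ∈ N.V.filter (fun v => N.IsRootClass v ∧ ∀ w ∈ N.V, N.UndirConn v w → v ≤ w),
      (∃ t, (dlt {a.succ}, t) ∈ ({(N.muFrom v, Tag.rn)} : MuEntry n)) ↔ v = x := by
    intro v hv
    simp only [Multiset.mem_singleton, Prod.mk.injEq, exists_and_left, exists_eq, and_true]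
    refine ⟨fun h => eq_of_muFrom_eq_dlt hN hx (Finset.mem_filter.1 hv).1 h.symm, ?_⟩
    rintro rfl
    exact (muFrom_of_hasLeaf hN.1 hx).symm
  rw [Finset.filter_congr hiff, Finset.filter_eq']
  by_cases h0 : N.indeg x = 0 <;>
    simp [mem_rootClassReps_iff hx.1 (hN.1.isLeafNode_of_hasLeaf hx).2.2, h0]

end DeltaVector

end Net

/-- Lemma 4: `δ_a` has multiplicity exactly 1 among the simple
μ-vectors of `μ(N)` iff `a` is a leaf of `N`. -/
theorem stmt6 {n : ℕ} (N : Net n) (hN : N.Good) (a : Fin n) :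
    multVec N.muRep (dlt ({a.succ} : Finset (Fin (n + 1)))) = 1 ↔
      ∃ x, N.HasLeaf a x := by
  refine ⟨fun h => ?_, fun ⟨x, hx⟩ => ?_⟩
  · by_contra ha
    rw [Net.multVec_dlt_eq_zero hN.1 (not_exists.1 ha)] at h
    exact zero_ne_one h
  · have hin : N.indeg x ≤ 1 := hN.1.leavesTree x (hN.1.isLeafNode_of_hasLeaf hx)
    rw [multVec, Net.muRep, Multiset.countP_add, Net.countP_edgeEntries_dlt hN hx,
      Net.countP_rootEntries_dlt hN hx]
    split_ifs <;> omega

end
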